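/- There exist constants C > 0 and δ₀ > 0 depending only on n such that: for every δ ∈ (0, δ₀), every convex body K with (1−δ)B∞ⁿ ⊆ K ⊆ B∞ⁿ, and every nonempty proper face F of B∞ⁿ (with sign vector ε and k = dim F), there exist points x_F ∈ ∂K and x*_F ∈ ∂K*, a real α_F > 0, and vectors h_F, h*_F ∈ ℝⁿ such that x_F = α_F·c_F + h_F, x*_F = α_F⁻¹·c_F/(n−k) + h*_F, ⟨x_F, x*_F⟩ = 1, h_F ∈ {h ∈ ℝⁿ : hᵢ = 0 whenever εᵢ = 0, and Σᵢ εᵢhᵢ = 0}, h*_F ∈ span{eᵢ : εᵢ = 0}, and |α_F − 1| ≤ Cδ, ‖h_F‖ ≤ Cδ, ‖h*_F‖ ≤ Cδ. -/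

import Mathlib

open MeasureTheory RealInnerProductSpace ENNReal Pointwise

noncomputable section

/-- The unit cube `B∞ⁿ = {x : |xᵢ| ≤ 1 ∀ i}`. -/
def cube (n : ℕ) : Set (EuclideanSpace ℝ (Fin n)) := {x | ∀ i, |x i| ≤ 1}

/-- The polar body `K* = {ξ : ⟨x, ξ⟩ ≤ 1 ∀ x ∈ K}`. -/
def polarBody {n : ℕ} (K : Set (EuclideanSpace ℝ (Fin n))) :
    Set (EuclideanSpace ℝ (Fin n)) :=
  {ξ | ∀ x ∈ K, ⟪x, ξ⟫ ≤ 1}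

/-- Nonempty proper faces of the cube `B∞ⁿ`, encoded by nonzero sign vectors
`ε ∈ {−1,0,1}ⁿ`: the face is `{x ∈ B∞ⁿ : xᵢ = εᵢ whenever εᵢ ≠ 0}`. -/
def Face (n : ℕ) : Type := {ε : Fin n → SignType // ε ≠ 0}

instance (n : ℕ) : Fintype (Face n) := Subtype.fintype _

/-- The center `c_F` of the face with sign vector `ε` is `ε` itself (as a real vector). -/
def ctr {n : ℕ} (F : Face n) : EuclideanSpace ℝ (Fin n) := WithLp.toLp 2 fun i => (F.1 i : ℝ)

/-- The dimension of a face: the number of zero coordinates of its sign vector. -/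
def faceDim {n : ℕ} (F : Face n) : ℕ := (Finset.univ.filter fun i => F.1 i = 0).card

/-! Let `U` be the span of the coordinates on which `ε` is nonzero and let `x` maximize
`⟨·, c_F⟩` on `K ∩ U`, with value `M`. The functional `M⁻¹⟨·, c_F⟩` is at most `1` on `K ∩ U`;
Hahn–Banach, applied with the gauge of `K` as sublinear bound, extends it to a functional at
most `1` on all of `K` that differs from it by some `⟨·, h*⟩` with `h* ⊥ U`. Then
`x* = M⁻¹ c_F + h*` lies in `K*` and `⟨x, x*⟩ = 1`, which puts `x` on `∂K` and `x*` on `∂K*`.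
Because `(1-δ)B∞ⁿ ⊆ K ⊆ B∞ⁿ`, each of the `n - k` terms `xᵢεᵢ ≤ 1` of `M ≥ (1-δ)(n-k)` is at
least `1 - (n-k)δ`; this bounds `x - α c_F`, `α = M/(n-k)`, coordinatewise. Testing `x*`
against the point `(1-δ)(c_F + h*/‖h*‖)` of `K` bounds `‖h*‖`. -/

open Filter Topology Finset

theorem exists_linearMap_eqOn_le_one_of_convex {E : Type*} [AddCommGroup E] [Module ℝ E]
    {K : Set E} (hK : Convex ℝ K) (hKa : Absorbent ℝ K) (U : Submodule ℝ E) (φ : E →ₗ[ℝ] ℝ)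
    (hφ : ∀ y ∈ K, y ∈ U → φ y ≤ 1) :
    ∃ Φ : E →ₗ[ℝ] ℝ, Set.EqOn Φ φ U ∧ ∀ y ∈ K, Φ y ≤ 1 := by
  have hφ_le_gauge : ∀ u : U, φ u ≤ gauge K u := by
    rintro ⟨u, hu⟩
    by_contra! hlt
    obtain ⟨b, hb, hbφ, y, hy, rfl⟩ := exists_lt_of_gauge_lt hKa hlt
    have hyU : y ∈ U := by simpa [hb.ne'] using U.smul_mem b⁻¹ hu
    rw [map_smul, smul_eq_mul] at hbφ
    nlinarith [hφ y hy hyU]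
  obtain ⟨Φ, hΦU, hΦK⟩ := exists_extension_of_le_sublinear (φ.toPMap U) (gauge K)
    (fun c hc x => by simpa using gauge_smul_of_nonneg hc.le x) (gauge_add_le hK hKa)
    hφ_le_gauge
  exact ⟨Φ, fun u hu => hΦU ⟨u, hu⟩, fun y hy => (hΦK y).trans (gauge_le_one_of_mem hy)⟩

theorem exists_mem_orthogonal_forall_inner_add_le_one {E : Type*} [NormedAddCommGroup E]
    [InnerProductSpace ℝ E] [FiniteDimensional ℝ E] {K : Set E} (hK : Convex ℝ K)
    (hK0 : K ∈ 𝓝 0) (U : Submodule ℝ E) (v : E) (hv : ∀ y ∈ K, y ∈ U → ⟪y, v⟫ ≤ 1) :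
    ∃ w ∈ Uᗮ, ∀ y ∈ K, ⟪y, v + w⟫ ≤ 1 := by
  obtain ⟨Φ, hΦU, hΦK⟩ := exists_linearMap_eqOn_le_one_of_convex hK (absorbent_nhds_zero hK0) U
    (innerₛₗ ℝ v) fun y hy hyU => by simpa [real_inner_comm] using hv y hy hyU
  set w := (InnerProductSpace.toDual ℝ E).symm (Φ - innerₛₗ ℝ v).toContinuousLinearMap
  have hw : ∀ y, ⟪y, w⟫ = Φ y - ⟪y, v⟫ := fun y => by
    rw [real_inner_comm, InnerProductSpace.toDual_symm_apply, real_inner_comm]; rfl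
  refine ⟨w, fun u hu => ?_, fun y hy => ?_⟩
  · rw [hw, hΦU hu, innerₛₗ_apply_apply, real_inner_comm, sub_self]
  · rw [inner_add_right, hw]
    linarith [hΦK y hy]

theorem exists_mem_orthogonal_inner_add_eq_one_of_isMaxOn {E : Type*} [NormedAddCommGroup E]
    [InnerProductSpace ℝ E] [FiniteDimensional ℝ E] {K : Set E} (hK : Convex ℝ K)
    (hK0 : K ∈ 𝓝 0) {U : Submodule ℝ E} {v x : E} (hxU : x ∈ U)
    (hx : IsMaxOn (⟪·, v⟫) (K ∩ U) x) (hxv : 0 < ⟪x, v⟫) :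
    ∃ w ∈ Uᗮ, (∀ y ∈ K, ⟪y, ⟪x, v⟫⁻¹ • v + w⟫ ≤ 1) ∧ ⟪x, ⟪x, v⟫⁻¹ • v + w⟫ = 1 := by
  obtain ⟨w, hwU, hw⟩ := exists_mem_orthogonal_forall_inner_add_le_one hK hK0 U (⟪x, v⟫⁻¹ • v)
    fun y hy hyU => by rw [real_inner_smul_right, inv_mul_le_one₀ hxv]; exact hx ⟨hy, hyU⟩
  refine ⟨w, hwU, hw, ?_⟩
  rw [inner_add_right, real_inner_smul_right, Submodule.inner_right_of_mem_orthogonal hxU hwU,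
    inv_mul_cancel₀ hxv.ne', add_zero]

theorem mem_frontier_of_inner_eq_one {E : Type*} [NormedAddCommGroup E] [InnerProductSpace ℝ E]
    {K : Set E} {x ξ : E} (hx : x ∈ K) (hK : ∀ y ∈ K, ⟪y, ξ⟫ ≤ 1) (hxξ : ⟪x, ξ⟫ = 1) :
    x ∈ frontier K := by
  refine ⟨subset_closure hx, fun hint => ?_⟩
  have hξ : 0 < ‖ξ‖ := norm_pos_iff.2 <| by rintro rfl; simp at hxξ
  have hline : Tendsto (fun t : ℝ => x + t • ξ) (𝓝[>] 0) (𝓝 x) :=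
    (Continuous.tendsto' (by fun_prop) 0 x (by simp)).mono_left nhdsWithin_le_nhds
  obtain ⟨t, htK, ht⟩ :=
    ((hline.eventually (mem_interior_iff_mem_nhds.1 hint)).and self_mem_nhdsWithin).exists
  have := hK _ htK
  rw [inner_add_left, real_inner_smul_left, hxξ, real_inner_self_eq_norm_sq] at this
  nlinarith [mul_pos (Set.mem_Ioi.1 ht) (pow_pos hξ 2)]

theorem EuclideanSpace.norm_le_sqrt_card_mul {ι : Type*} [Fintype ι] {x : EuclideanSpace ℝ ι}
    {r : ℝ} (hr : 0 ≤ r) (hx : ∀ i, |x i| ≤ r) : ‖x‖ ≤ √(Fintype.card ι) * r := by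
  rw [EuclideanSpace.norm_eq, ← Real.sqrt_sq hr, ← Real.sqrt_mul (by positivity)]
  gcongr
  calc ∑ i, ‖x i‖ ^ 2 ≤ ∑ _i : ι, r ^ 2 := by
        gcongr with i; exact (Real.norm_eq_abs _).trans_le (hx i)
    _ = _ := by simp

theorem cube_mem_nhds_zero (n : ℕ) : cube n ∈ 𝓝 0 :=
  mem_of_superset (Metric.ball_mem_nhds 0 one_pos) fun x hx i =>
    ((PiLp.norm_apply_le x i).trans (mem_ball_zero_iff.1 hx).le)

theorem smul_cube_mem_nhds_zero (n : ℕ) {t : ℝ} (ht : t ≠ 0) : t • cube n ∈ 𝓝 0 :=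
  (set_smul_mem_nhds_zero_iff ht).2 (cube_mem_nhds_zero n)

theorem mem_frontier_polarBody {n : ℕ} {K : Set (EuclideanSpace ℝ (Fin n))}
    {x ξ : EuclideanSpace ℝ (Fin n)} (hx : x ∈ K) (hξ : ξ ∈ polarBody K) (hxξ : ⟪x, ξ⟫ = 1) :
    ξ ∈ frontier (polarBody K) :=
  mem_frontier_of_inner_eq_one hξ (fun η hη => real_inner_comm x η ▸ hη x hx)
    (real_inner_comm x ξ ▸ hxξ)

namespace Face

variable {n : ℕ} {F : Face n}

/-- `span {eᵢ : εᵢ ≠ 0}`; its orthogonal complement is the direction of `F`. -/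
def normalSubspace (F : Face n) : Submodule ℝ (EuclideanSpace ℝ (Fin n)) :=
  ⨅ (i) (_ : F.1 i = 0), LinearMap.ker (PiLp.projₗ 2 (fun _ => ℝ) i)

theorem mem_normalSubspace {y : EuclideanSpace ℝ (Fin n)} :
    y ∈ F.normalSubspace ↔ ∀ i, F.1 i = 0 → y i = 0 := by
  simp [normalSubspace, Submodule.mem_iInf]

theorem ctr_mem_normalSubspace : ctr F ∈ F.normalSubspace :=
  mem_normalSubspace.2 fun i hi => by simp [ctr, hi]

theorem apply_eq_zero_of_mem_orthogonal {w : EuclideanSpace ℝ (Fin n)}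
    (hw : w ∈ F.normalSubspaceᗮ) {i : Fin n} (hi : F.1 i ≠ 0) : w i = 0 := by
  have hsingle : EuclideanSpace.single i (1 : ℝ) ∈ F.normalSubspace :=
    mem_normalSubspace.2 fun j hj => by
      simp [show j ≠ i by rintro rfl; exact hi hj]
  simpa [EuclideanSpace.inner_single_left] using Submodule.inner_right_of_mem_orthogonal hsingle hw

theorem inner_ctr (y : EuclideanSpace ℝ (Fin n)) : ⟪y, ctr F⟫ = ∑ i, y i * F.1 i := by
  simp [PiLp.inner_apply, ctr, mul_comm]

theorem sub_faceDim_eq_card : n - faceDim F = #{i | F.1 i ≠ 0} := by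
  have := Finset.card_filter_add_card_filter_not (s := Finset.univ) (fun i => F.1 i = 0)
  simp only [Finset.card_univ, Fintype.card_fin] at this
  simp only [faceDim, ne_eq]
  omega

theorem inner_ctr_self : ⟪ctr F, ctr F⟫ = ((n - faceDim F : ℕ) : ℝ) := by
  rw [inner_ctr, sub_faceDim_eq_card, Finset.natCast_card_filter]
  refine Finset.sum_congr rfl fun i _ => ?_
  cases h : F.1 i <;> simp [ctr, h]

theorem one_le_inner_ctr_self : 1 ≤ ⟪ctr F, ctr F⟫ := by
  obtain ⟨i, hi⟩ := Function.ne_iff.1 F.2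
  rw [inner_ctr_self, sub_faceDim_eq_card, Nat.one_le_cast, Nat.one_le_iff_ne_zero,
    ← Nat.pos_iff_ne_zero, Finset.card_pos]
  exact ⟨i, by simpa using hi⟩

theorem inner_ctr_self_le : ⟪ctr F, ctr F⟫ ≤ n := by
  rw [inner_ctr_self]
  exact Nat.cast_le.2 (Nat.sub_le _ _)

theorem ctr_add_mem_cube {w : EuclideanSpace ℝ (Fin n)} (hw : ∀ i, F.1 i ≠ 0 → w i = 0)
    (hw1 : ‖w‖ ≤ 1) : ctr F + w ∈ cube n := by
  intro i
  by_cases hi : F.1 i = 0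
  · simpa [ctr, hi] using (PiLp.norm_apply_le w i).trans hw1
  · rw [PiLp.add_apply, hw i hi, add_zero]
    cases h : F.1 i <;> simp [ctr, h]

theorem ctr_mem_cube : ctr F ∈ cube n := by
  simpa using ctr_add_mem_cube (F := F) (w := 0) (by simp) (by simp)

theorem sub_ctr_apply_mul_nonneg {y : EuclideanSpace ℝ (Fin n)} (hy : y ∈ cube n) (i : Fin n) :
    0 ≤ (ctr F - y) i * F.1 i := by
  have := abs_le.1 (hy i)
  cases h : F.1 i <;> simp [ctr, h] <;> linarith

theorem inner_le_inner_ctr_self {y : EuclideanSpace ℝ (Fin n)} (hy : y ∈ cube n) :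
    ⟪y, ctr F⟫ ≤ ⟪ctr F, ctr F⟫ := by
  have : 0 ≤ ⟪ctr F - y, ctr F⟫ := by
    rw [inner_ctr]
    exact Finset.sum_nonneg fun i _ => sub_ctr_apply_mul_nonneg hy i
  rw [inner_sub_left] at this
  linarith

theorem exists_isMaxOn_inner_ctr {K : Set (EuclideanSpace ℝ (Fin n))} (hK : IsCompact K)
    {δ : ℝ} (hKδ : (1 - δ) • cube n ⊆ K) :
    ∃ x ∈ K, x ∈ F.normalSubspace ∧ IsMaxOn (⟪·, ctr F⟫) (K ∩ F.normalSubspace) x ∧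
      (1 - δ) * ⟪ctr F, ctr F⟫ ≤ ⟪x, ctr F⟫ := by
  have hc : (1 - δ) • ctr F ∈ K ∩ F.normalSubspace :=
    ⟨hKδ (Set.smul_mem_smul_set ctr_mem_cube), F.normalSubspace.smul_mem _ ctr_mem_normalSubspace⟩
  obtain ⟨x, ⟨hxK, hxU⟩, hx⟩ :=
    (hK.inter_right F.normalSubspace.closed_of_finiteDimensional).exists_isMaxOn ⟨_, hc⟩
      (continuous_id.inner continuous_const : Continuous (⟪·, ctr F⟫)).continuousOn
  exact ⟨x, hxK, hxU, hx, by simpa [real_inner_smul_left] using hx hc⟩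

theorem one_sub_le_div_inner_ctr_self {y : EuclideanSpace ℝ (Fin n)} {δ : ℝ}
    (hy : (1 - δ) * ⟪ctr F, ctr F⟫ ≤ ⟪y, ctr F⟫) : 1 - δ ≤ ⟪y, ctr F⟫ / ⟪ctr F, ctr F⟫ :=
  (le_div_iff₀ (zero_lt_one.trans_le one_le_inner_ctr_self)).2 hy

theorem div_inner_ctr_self_le_one {y : EuclideanSpace ℝ (Fin n)} (hy : y ∈ cube n) :
    ⟪y, ctr F⟫ / ⟪ctr F, ctr F⟫ ≤ 1 :=
  div_le_one_of_le₀ (inner_le_inner_ctr_self hy) (zero_le_one.trans one_le_inner_ctr_self)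

theorem sub_smul_ctr_apply_eq_zero {y : EuclideanSpace ℝ (Fin n)} (hy : y ∈ F.normalSubspace)
    (α : ℝ) {i : Fin n} (hi : F.1 i = 0) : (y - α • ctr F) i = 0 := by
  simp [mem_normalSubspace.1 hy i hi, ctr, hi]

theorem sum_mul_sub_smul_ctr_eq_zero (y : EuclideanSpace ℝ (Fin n)) :
    ∑ i, (F.1 i : ℝ) * (y - (⟪y, ctr F⟫ / ⟪ctr F, ctr F⟫) • ctr F) i = 0 := by
  have hc : ⟪ctr F, ctr F⟫ ≠ 0 := (zero_lt_one.trans_le one_le_inner_ctr_self).ne'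
  set α := ⟪y, ctr F⟫ / ⟪ctr F, ctr F⟫
  have hperp : ⟪y - α • ctr F, ctr F⟫ = 0 := by
    rw [inner_sub_left, real_inner_smul_left, div_mul_cancel₀ _ hc, sub_self]
  rw [← hperp, inner_ctr (y - α • ctr F)]
  exact Finset.sum_congr rfl fun i _ => mul_comm _ _

theorem abs_sub_smul_ctr_apply_le {y : EuclideanSpace ℝ (Fin n)} (hy : y ∈ cube n)
    (hyU : y ∈ F.normalSubspace) {r α : ℝ} (hr : ⟪ctr F - y, ctr F⟫ ≤ r) (hα : 1 - r ≤ α)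
    (hα1 : α ≤ 1) (i : Fin n) : |(y - α • ctr F) i| ≤ r := by
  have hterm : (ctr F - y) i * F.1 i ≤ r := by
    refine le_trans ?_ hr
    rw [inner_ctr]
    exact Finset.single_le_sum (fun j _ => sub_ctr_apply_mul_nonneg hy j) (Finset.mem_univ i)
  have hr0 := (sub_ctr_apply_mul_nonneg hy i).trans hterm
  by_cases hi : F.1 i = 0
  · simpa [mem_normalSubspace.1 hyU i hi, ctr, hi] using hr0
  · have hyi := abs_le.1 (hy i)
    cases h : F.1 i <;> simp [ctr, h] at hterm hi ⊢ <;> rw [abs_le] <;> constructor <;> linarith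

theorem norm_sub_smul_ctr_le {y : EuclideanSpace ℝ (Fin n)} (hy : y ∈ cube n)
    (hyU : y ∈ F.normalSubspace) {δ : ℝ} (hδ : 0 ≤ δ)
    (hyδ : (1 - δ) * ⟪ctr F, ctr F⟫ ≤ ⟪y, ctr F⟫) :
    ‖y - (⟪y, ctr F⟫ / ⟪ctr F, ctr F⟫) • ctr F‖ ≤ n ^ 2 * δ := by
  have hm1 := one_le_inner_ctr_self (F := F)
  have hmn := inner_ctr_self_le (F := F)
  have hcoord := abs_sub_smul_ctr_apply_le hy hyU (r := ⟪ctr F, ctr F⟫ * δ)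
    (by rw [inner_sub_left]; linarith)
    ((by nlinarith : 1 - ⟪ctr F, ctr F⟫ * δ ≤ 1 - δ).trans (one_sub_le_div_inner_ctr_self hyδ))
    (div_inner_ctr_self_le_one hy)
  have hsqrt : √(n : ℝ) ≤ n := Real.sqrt_le_self_iff.2 (Or.inr (hm1.trans hmn))
  calc _ ≤ √(n : ℝ) * (⟪ctr F, ctr F⟫ * δ) := by
        simpa using EuclideanSpace.norm_le_sqrt_card_mul (by positivity) hcoord
    _ ≤ n * (n * δ) := by gcongr
    _ = n ^ 2 * δ := by ring

theorem mul_norm_le_of_forall_inner_le_one {K : Set (EuclideanSpace ℝ (Fin n))} {δ M : ℝ}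
    (hδ : δ < 1) (hK : (1 - δ) • cube n ⊆ K) (hM : 0 < M) (hMc : M ≤ ⟪ctr F, ctr F⟫)
    {w : EuclideanSpace ℝ (Fin n)} (hw : w ∈ F.normalSubspaceᗮ)
    (hKw : ∀ y ∈ K, ⟪y, M⁻¹ • ctr F + w⟫ ≤ 1) : (1 - δ) * ‖w‖ ≤ δ := by
  have hu : ctr F + ‖w‖⁻¹ • w ∈ cube n := by
    refine ctr_add_mem_cube (fun i hi => by simp [apply_eq_zero_of_mem_orthogonal hw hi]) ?_
    simpa [norm_smul] using inv_mul_le_one (a := ‖w‖)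
  have htest := hKw _ (hK (Set.smul_mem_smul_set hu))
  have hcw := Submodule.inner_right_of_mem_orthogonal ctr_mem_normalSubspace hw
  have hwc := Submodule.inner_left_of_mem_orthogonal ctr_mem_normalSubspace hw
  simp only [real_inner_smul_left, real_inner_smul_right, inner_add_left, inner_add_right, hcw,
    hwc] at htest
  have hc : 1 ≤ M⁻¹ * ⟪ctr F, ctr F⟫ := by rw [le_inv_mul_iff₀ hM, mul_one]; exact hMc
  have hw' : ‖w‖⁻¹ * ⟪w, w⟫ = ‖w‖ := by
    rw [real_inner_self_eq_norm_sq, sq, ← mul_assoc, inv_mul_mul_self]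
  nlinarith

end Face

/-- for every face `F` of the cube there are points
`x_F = α_F·c_F + h_F ∈ ∂K` and `x*_F = α_F⁻¹·c_F/(n−dim F) + h*_F ∈ ∂K*` with
`⟨x_F, x*_F⟩ = 1`, where `h_F` lies in the direction space of the face of `B₁ⁿ` dual
to `F`, `h*_F` lies in the direction space of `F`, and
`|α_F − 1|, ‖h_F‖, ‖h*_F‖ ≤ Cδ`. -/
theorem boundary_points_near_face_centers (n : ℕ) :
    ∃ C : ℝ, 0 < C ∧ ∃ δ₀ : ℝ, 0 < δ₀ ∧
      ∀ δ : ℝ, 0 < δ → δ < δ₀ →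
        ∀ K : Set (EuclideanSpace ℝ (Fin n)),
          Convex ℝ K → IsCompact K → (interior K).Nonempty →
          (1 - δ) • cube n ⊆ K → K ⊆ cube n →
          ∀ F : Face n,
            ∃ xF ∈ frontier K, ∃ xsF ∈ frontier (polarBody K),
              ∃ α : ℝ, 0 < α ∧
                ∃ h hs : EuclideanSpace ℝ (Fin n),
                  xF = α • ctr F + h ∧
                  xsF = α⁻¹ • (((n - faceDim F : ℕ) : ℝ)⁻¹ • ctr F) + hs ∧
                  ⟪xF, xsF⟫ = 1 ∧
                  (∀ i, F.1 i = 0 → h i = 0) ∧ (∑ i, (F.1 i : ℝ) * h i = 0) ∧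
                  (∀ i, F.1 i ≠ 0 → hs i = 0) ∧
                  |α - 1| ≤ C * δ ∧ ‖h‖ ≤ C * δ ∧ ‖hs‖ ≤ C * δ := by
  refine ⟨n ^ 2 + 2, by positivity, 1 / 2, by norm_num,
    fun δ hδ hδ₀ K hK hKc _ hlow hup F => ?_⟩
  have hm1 := Face.one_le_inner_ctr_self (F := F)
  obtain ⟨x, hxK, hxU, hxmax, hMlow⟩ := Face.exists_isMaxOn_inner_ctr (F := F) hKc hlow
  have hM : 0 < ⟪x, ctr F⟫ := by nlinarith
  obtain ⟨hs, hsU, hpolar, hxξ⟩ := exists_mem_orthogonal_inner_add_eq_one_of_isMaxOn hK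
    (mem_of_superset (smul_cube_mem_nhds_zero n (by linarith)) hlow) hxU hxmax hM
  have hhs := Face.mul_norm_le_of_forall_inner_le_one (by linarith) hlow hM
    (Face.inner_le_inner_ctr_self (hup hxK)) hsU hpolar
  refine ⟨x, mem_frontier_of_inner_eq_one hxK hpolar hxξ, _,
    mem_frontier_polarBody hxK hpolar hxξ, ⟪x, ctr F⟫ / ⟪ctr F, ctr F⟫, div_pos hM (by linarith),
    _, hs, (add_sub_cancel _ _).symm, ?_, hxξ, fun i => Face.sub_smul_ctr_apply_eq_zero hxU _,
    Face.sum_mul_sub_smul_ctr_eq_zero x, fun i => Face.apply_eq_zero_of_mem_orthogonal hsU, ?_,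
    (Face.norm_sub_smul_ctr_le (hup hxK) hxU hδ.le hMlow).trans (by nlinarith),
    by nlinarith [norm_nonneg hs, mul_nonneg (sq_nonneg (n : ℝ)) hδ.le]⟩
  · rw [smul_smul, ← mul_inv, ← Face.inner_ctr_self, div_mul_cancel₀ _ (by linarith)]
  · have := Face.one_sub_le_div_inner_ctr_self hMlow
    have := Face.div_inner_ctr_self_le_one (F := F) (hup hxK)
    rw [abs_le]; constructor <;> nlinarith
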